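/- Fix T > 0, σ ∈ ℝ, R ∈ (0,1], and let α(t) = λ e^{-ρ t} + (1-λ) e^{-γ t} with γ > ρ > 0 and λ ∈ (0,1). Then there exists a continuous function P : Δ[0,T] → ℝ, where Δ[0,T] = {(t,s) : 0 ≤ t ≤ s ≤ T}, such that for each fixed t ∈ [0,T] the map s ↦ P(t,s) is differentiable on [t,T] and satisfies the equilibrium Riccati equation ∂_s P(t,s) + (σ² - 2((1-R)/R) P(s,s)) P(t,s) + α(s-t) ((1-R)/R) P(s,s)² = 0 for all (t,s) ∈ Δ[0,T], with terminal condition P(t,T) = α(T-t) for all t ∈ [0,T]; moreover this solution satisfies P(t,s) ≥ 0 for all (t,s) ∈ Δ[0,T]. -/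

import Mathlib

open Real Set

/-- `P` (with `s`-partial derivative `Ps`) is a continuous solution, on
`Δ[0,T] = {(t,s) : 0 ≤ t ≤ s ≤ T}`, of the equilibrium Riccati equation
`∂ₛP(t,s) + (σ² - 2((1-R)/R) P(s,s)) P(t,s) + α(s-t) ((1-R)/R) P(s,s)² = 0`
with terminal condition `P(t,T) = α(T-t)`. -/
def IsERESolution (T σ R : ℝ) (α : ℝ → ℝ) (P Ps : ℝ → ℝ → ℝ) : Prop :=
  ContinuousOn (fun p : ℝ × ℝ => P p.1 p.2)
    {p : ℝ × ℝ | 0 ≤ p.1 ∧ p.1 ≤ p.2 ∧ p.2 ≤ T} ∧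
  (∀ t ∈ Set.Icc (0 : ℝ) T, ∀ s ∈ Set.Icc t T,
    HasDerivWithinAt (P t) (Ps t s) (Set.Icc t T) s ∧
    Ps t s + (σ ^ 2 - 2 * ((1 - R) / R) * P s s) * P t s
      + α (s - t) * (((1 - R) / R) * (P s s) ^ 2) = 0) ∧
  (∀ t ∈ Set.Icc (0 : ℝ) T, P t T = α (T - t))

/-!
With the ansatz `P(t,s) = l e^{-ρ(s-t)} X(T-s) + (1-l) e^{-γ(s-t)} Y(T-s)` one has
`P(s,s) = h(T-s)` for `h = l X + (1-l) Y`, and the ERE splits along the two exponentials into the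
autonomous system `X' = c h² - (ρ - σ² + 2ch) X`, `Y' = c h² - (γ - σ² + 2ch) Y`, `X(0) = Y(0) = 1`,
where `c = (1-R)/R ≥ 0`. Its right-hand side is only locally Lipschitz, so we first solve it with
`X, Y` clamped to `[0, K]` (a globally Lipschitz, bounded field, so Picard–Lindelöf applies on all
of `[0, T]`) and then show that the clamp is never active. Where `X < 0` the clamped derivative is
`c h² ≥ 0`, so `X, Y ≥ 0`; the weighted sum `l X + (1-l) Y` has derivative at most `σ² h`, so it
is bounded by `e^{σ² T}`; Grönwall then bounds `X` and `Y` by a constant `K` depending only on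
`σ, c, T`. Finally `P ≥ 0` because `X, Y ≥ 0`.
-/

open scoped NNReal

theorem HasDerivWithinAt.Ici_of_Icc {F : Type*} [NormedAddCommGroup F] [NormedSpace ℝ F]
    {f : ℝ → F} {f' : F} {a b x : ℝ} (h : HasDerivWithinAt f f' (Icc a b) x) (hx : x ∈ Ico a b) :
    HasDerivWithinAt f f' (Ici x) x :=
  h.mono_of_mem_nhdsWithin (Icc_mem_nhdsGE_of_mem hx)

theorem nonneg_of_deriv_nonneg_of_neg {f f' : ℝ → ℝ} {a b : ℝ}
    (hf : ∀ x ∈ Icc a b, HasDerivWithinAt f (f' x) (Icc a b) x) (ha : 0 ≤ f a)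
    (hneg : ∀ x ∈ Icc a b, f x < 0 → 0 ≤ f' x) :
    ∀ x ∈ Icc a b, 0 ≤ f x := by
  have hcont : ContinuousOn (fun x => -f x) (Icc a b) :=
    fun x hx => (hf x hx).continuousWithinAt.neg
  have hright : ∀ x ∈ Ico a b, HasDerivWithinAt (fun x => -f x) (-f' x) (Ici x) x :=
    fun x hx => ((hf x (Ico_subset_Icc_self hx)).Ici_of_Icc hx).neg
  intro x hx
  -- `-f` cannot cross any of the lines `ε (1 + (y - a))`, which have positive slope
  have hline : ∀ ε > 0, -f x ≤ ε * (1 + (x - a)) := fun ε hε =>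
    image_le_of_deriv_right_lt_deriv_boundary hcont hright
      (B := fun y => ε * (1 + (y - a))) (B' := fun _ => ε) (by simp; linarith)
      (fun y => by simpa using (((hasDerivAt_id y).sub_const a).const_add 1).const_mul ε)
      (fun y hy hfy => by
        have : f y < 0 := by nlinarith [hy.1]
        linarith [hneg y (Ico_subset_Icc_self hy) this])
      hx
  have hpos : 0 < 1 + (x - a) := by linarith [hx.1]
  refine neg_nonpos.1 <| le_of_forall_pos_le_add fun ε hε => ?_
  simpa [div_mul_cancel₀ _ hpos.ne'] using hline (ε / (1 + (x - a))) (by positivity)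

theorem le_gronwallBound_of_hasDerivWithinAt {f f' : ℝ → ℝ} {δ K ε a b : ℝ}
    (hf : ∀ x ∈ Icc a b, HasDerivWithinAt f (f' x) (Icc a b) x) (ha : f a ≤ δ)
    (bound : ∀ x ∈ Icc a b, f' x ≤ K * f x + ε) :
    ∀ x ∈ Icc a b, f x ≤ gronwallBound δ K ε (x - a) :=
  le_gronwallBound_of_liminf_deriv_right_le (fun x hx => (hf x hx).continuousWithinAt)
    (fun x hx _ hr => ((hf x (Ico_subset_Icc_self hx)).Ici_of_Icc hx).liminf_right_slope_le hr)
    ha fun x hx => bound x (Ico_subset_Icc_self hx)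

theorem exists_forall_mem_Icc_hasDerivWithinAt_of_lipschitzWith {E : Type*}
    [NormedAddCommGroup E] [NormedSpace ℝ E] [CompleteSpace E] {F : E → E} {K : ℝ≥0} {C : ℝ}
    (hF : LipschitzWith K F) (hC : ∀ x, ‖F x‖ ≤ C) (x₀ : E) {T : ℝ} (hT : 0 ≤ T) :
    ∃ u : ℝ → E, u 0 = x₀ ∧ ∀ t ∈ Icc 0 T, HasDerivWithinAt u (F (u t)) (Icc 0 T) t :=
  (IsPicardLindelof.of_time_independent (t₀ := ⟨0, left_mem_Icc.2 hT⟩) (x₀ := x₀)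
    (a := C.toNNReal * T.toNNReal) (r := 0) (fun x _ => (hC x).trans (le_coe_toNNReal C))
    hF.lipschitzOnWith (by simp [hT])).exists_eq_forall_mem_Icc_hasDerivWithinAt₀

theorem ContDiff.exists_lipschitzWith_comp {E F X : Type*} [NormedAddCommGroup E]
    [NormedSpace ℝ E] [NormedAddCommGroup F] [NormedSpace ℝ F] [PseudoMetricSpace X]
    {G : E → F} (hG : ContDiff ℝ 1 G) {proj : X → E} {K : ℝ≥0} (hproj : LipschitzWith K proj)
    {S : Set E} (hS : IsCompact S) (hSc : Convex ℝ S) (hprojS : ∀ x, proj x ∈ S) :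
    ∃ L, LipschitzWith L (G ∘ proj) := by
  obtain ⟨L, hL⟩ := hG.contDiffOn.exists_lipschitzOnWith one_ne_zero hSc hS
  exact ⟨L * K, lipschitzOnWith_univ.1 (hL.comp hproj.lipschitzOnWith fun x _ => hprojS x)⟩

theorem Set.coe_projIcc_le_self {α : Type*} [LinearOrder α] {a b x : α} (h : a ≤ b)
    (hx : a ≤ x) : (projIcc a b h x : α) ≤ x := by
  rw [coe_projIcc]
  exact max_le hx (min_le_right _ _)

def reducedRhs (σ c μ h x : ℝ) : ℝ := c * h ^ 2 - (μ - σ ^ 2 + 2 * c * h) * x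

def reducedField (σ c ρ γ l : ℝ) (p : ℝ × ℝ) : ℝ × ℝ :=
  (reducedRhs σ c ρ (l * p.1 + (1 - l) * p.2) p.1,
    reducedRhs σ c γ (l * p.1 + (1 - l) * p.2) p.2)

theorem contDiff_reducedField (σ c ρ γ l : ℝ) : ContDiff ℝ 1 (reducedField σ c ρ γ l) := by
  unfold reducedField reducedRhs
  fun_prop

theorem reducedRhs_le (σ : ℝ) {c μ h H a x : ℝ} (hc : 0 ≤ c) (hμ : 0 ≤ μ) (hh : 0 ≤ h)
    (hhH : h ≤ H) (ha : 0 ≤ a) (hax : a ≤ x) :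
    reducedRhs σ c μ h a ≤ σ ^ 2 * x + c * H ^ 2 := by
  unfold reducedRhs
  nlinarith [mul_nonneg hμ ha, mul_nonneg (mul_nonneg hc hh) ha,
    mul_nonneg (sq_nonneg σ) (sub_nonneg.2 hax),
    mul_le_mul_of_nonneg_left (pow_le_pow_left₀ hh hhH 2) hc]

theorem weighted_reducedRhs_le (σ : ℝ) {c ρ γ l a b : ℝ} (hc : 0 ≤ c) (hρ : 0 ≤ ρ)
    (hγ : 0 ≤ γ) (hl0 : 0 ≤ l) (hl1 : l ≤ 1) (ha : 0 ≤ a) (hb : 0 ≤ b) :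
    l * reducedRhs σ c ρ (l * a + (1 - l) * b) a
        + (1 - l) * reducedRhs σ c γ (l * a + (1 - l) * b) b
      ≤ σ ^ 2 * (l * a + (1 - l) * b) := by
  have hl1' : 0 ≤ 1 - l := sub_nonneg.2 hl1
  have : 0 ≤ c * (l * a + (1 - l) * b) ^ 2 + ρ * l * a + γ * (1 - l) * b := by positivity
  unfold reducedRhs
  linarith

noncomputable def clampBox {K : ℝ} (hK : 0 ≤ K) (p : ℝ × ℝ) : ℝ × ℝ :=
  (projIcc 0 K hK p.1, projIcc 0 K hK p.2)

theorem lipschitzWith_clampBox {K : ℝ} (hK : 0 ≤ K) : LipschitzWith 1 (clampBox hK) := by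
  have h : LipschitzWith 1 fun x : ℝ => (projIcc 0 K hK x : ℝ) :=
    LipschitzWith.subtype_val _ |>.comp (LipschitzWith.projIcc hK) |>.weaken (by simp)
  have := (h.comp LipschitzWith.prod_fst).prodMk (h.comp LipschitzWith.prod_snd)
  rwa [mul_one, max_self] at this

theorem clampBox_mem {K : ℝ} (hK : 0 ≤ K) (p : ℝ × ℝ) : clampBox hK p ∈ Icc 0 K ×ˢ Icc 0 K :=
  ⟨(projIcc 0 K hK p.1).2, (projIcc 0 K hK p.2).2⟩

theorem clampBox_of_mem {K : ℝ} (hK : 0 ≤ K) {p : ℝ × ℝ} (hp : p ∈ Icc 0 K ×ˢ Icc 0 K) :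
    clampBox hK p = p := by
  simp [clampBox, projIcc_of_mem hK hp.1, projIcc_of_mem hK hp.2]

theorem exists_truncated_solution (σ c ρ γ l : ℝ) {K T : ℝ} (hK : 0 ≤ K) (hT : 0 ≤ T)
    (u₀ : ℝ × ℝ) :
    ∃ u : ℝ → ℝ × ℝ, u 0 = u₀ ∧ ∀ τ ∈ Icc 0 T,
      HasDerivWithinAt u (reducedField σ c ρ γ l (clampBox hK (u τ))) (Icc 0 T) τ := by
  have hS : IsCompact (Icc (0 : ℝ) K ×ˢ Icc 0 K) := isCompact_Icc.prod isCompact_Icc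
  obtain ⟨L, hL⟩ := (contDiff_reducedField σ c ρ γ l).exists_lipschitzWith_comp
    (lipschitzWith_clampBox hK) hS ((convex_Icc 0 K).prod (convex_Icc 0 K)) (clampBox_mem hK)
  obtain ⟨C, hC⟩ :=
    hS.exists_bound_of_continuousOn (contDiff_reducedField σ c ρ γ l).continuous.continuousOn
  exact exists_forall_mem_Icc_hasDerivWithinAt_of_lipschitzWith hL
    (fun p => hC _ (clampBox_mem hK p)) u₀ hT

section Truncated

variable {σ c μ K T : ℝ} {x h : ℝ → ℝ} (hK : 0 ≤ K)

theorem nonneg_of_hasDerivWithinAt_reducedRhs_projIcc (hc : 0 ≤ c)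
    (hx : ∀ τ ∈ Icc 0 T,
      HasDerivWithinAt x (reducedRhs σ c μ (h τ) (projIcc 0 K hK (x τ))) (Icc 0 T) τ)
    (hx0 : 0 ≤ x 0) : ∀ τ ∈ Icc 0 T, 0 ≤ x τ :=
  nonneg_of_deriv_nonneg_of_neg hx hx0 fun τ _ hneg => by
    rw [projIcc_of_le_left hK hneg.le, reducedRhs, mul_zero, sub_zero]
    positivity

theorem le_gronwallBound_of_hasDerivWithinAt_reducedRhs_projIcc {H : ℝ} (hc : 0 ≤ c)
    (hμ : 0 ≤ μ)
    (hx : ∀ τ ∈ Icc 0 T,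
      HasDerivWithinAt x (reducedRhs σ c μ (h τ) (projIcc 0 K hK (x τ))) (Icc 0 T) τ)
    (hx_nonneg : ∀ τ ∈ Icc 0 T, 0 ≤ x τ) (hh : ∀ τ ∈ Icc 0 T, 0 ≤ h τ ∧ h τ ≤ H) :
    ∀ τ ∈ Icc 0 T, x τ ≤ gronwallBound (x 0) (σ ^ 2) (c * H ^ 2) τ := by
  simpa using le_gronwallBound_of_hasDerivWithinAt hx le_rfl fun τ hτ =>
    reducedRhs_le σ hc hμ (hh τ hτ).1 (hh τ hτ).2 (projIcc 0 K hK (x τ)).2.1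
      (coe_projIcc_le_self hK (hx_nonneg τ hτ))

theorem weighted_le_exp_of_hasDerivWithinAt_reducedRhs_projIcc {ρ γ l : ℝ} {x y : ℝ → ℝ}
    (hc : 0 ≤ c) (hρ : 0 ≤ ρ) (hγ : 0 ≤ γ) (hl0 : 0 ≤ l) (hl1 : l ≤ 1)
    (hx : ∀ τ ∈ Icc 0 T, HasDerivWithinAt x (reducedRhs σ c ρ
      (l * projIcc 0 K hK (x τ) + (1 - l) * projIcc 0 K hK (y τ)) (projIcc 0 K hK (x τ)))
      (Icc 0 T) τ)
    (hy : ∀ τ ∈ Icc 0 T, HasDerivWithinAt y (reducedRhs σ c γ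
      (l * projIcc 0 K hK (x τ) + (1 - l) * projIcc 0 K hK (y τ)) (projIcc 0 K hK (y τ)))
      (Icc 0 T) τ)
    (hx_nonneg : ∀ τ ∈ Icc 0 T, 0 ≤ x τ) (hy_nonneg : ∀ τ ∈ Icc 0 T, 0 ≤ y τ)
    (hx0 : x 0 = 1) (hy0 : y 0 = 1) :
    ∀ τ ∈ Icc 0 T, l * x τ + (1 - l) * y τ ≤ exp (σ ^ 2 * τ) := by
  simpa [gronwallBound_ε0] using le_gronwallBound_of_hasDerivWithinAt (ε := 0) (δ := 1)
    (f := fun τ => l * x τ + (1 - l) * y τ)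
    (fun τ hτ => ((hx τ hτ).const_mul l).add ((hy τ hτ).const_mul (1 - l))) (by simp [hx0, hy0])
    fun τ hτ => by
      have := weighted_reducedRhs_le σ hc hρ hγ hl0 hl1
        (projIcc 0 K hK (x τ)).2.1 (projIcc 0 K hK (y τ)).2.1
      have := mul_le_mul_of_nonneg_left (coe_projIcc_le_self hK (hx_nonneg τ hτ)) hl0
      have := mul_le_mul_of_nonneg_left (coe_projIcc_le_self hK (hy_nonneg τ hτ))
        (sub_nonneg.2 hl1)
      nlinarith [sq_nonneg σ]

end Truncated

theorem truncated_solution_mem {σ c ρ γ l K T : ℝ} (hK : 0 ≤ K) (hc : 0 ≤ c) (hρ : 0 ≤ ρ)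
    (hγ : 0 ≤ γ) (hl0 : 0 ≤ l) (hl1 : l ≤ 1)
    (hK_ge : gronwallBound 1 (σ ^ 2) (c * exp (σ ^ 2 * T) ^ 2) T ≤ K)
    {u : ℝ → ℝ × ℝ} (hu0 : u 0 = (1, 1)) (hu : ∀ τ ∈ Icc 0 T,
      HasDerivWithinAt u (reducedField σ c ρ γ l (clampBox hK (u τ))) (Icc 0 T) τ) :
    ∀ τ ∈ Icc 0 T, u τ ∈ Icc 0 K ×ˢ Icc 0 K := by
  set a : ℝ → ℝ := fun τ => projIcc 0 K hK (u τ).1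
  set b : ℝ → ℝ := fun τ => projIcc 0 K hK (u τ).2
  have hX : ∀ τ ∈ Icc 0 T, HasDerivWithinAt (fun τ => (u τ).1)
      (reducedRhs σ c ρ (l * a τ + (1 - l) * b τ) (a τ)) (Icc 0 T) τ := fun τ hτ =>
    (ContinuousLinearMap.fst ℝ ℝ ℝ).hasFDerivAt.comp_hasDerivWithinAt τ (hu τ hτ)
  have hY : ∀ τ ∈ Icc 0 T, HasDerivWithinAt (fun τ => (u τ).2)
      (reducedRhs σ c γ (l * a τ + (1 - l) * b τ) (b τ)) (Icc 0 T) τ := fun τ hτ =>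
    (ContinuousLinearMap.snd ℝ ℝ ℝ).hasFDerivAt.comp_hasDerivWithinAt τ (hu τ hτ)
  have hX_nonneg := nonneg_of_hasDerivWithinAt_reducedRhs_projIcc hK hc hX (by simp [hu0])
  have hY_nonneg := nonneg_of_hasDerivWithinAt_reducedRhs_projIcc hK hc hY (by simp [hu0])
  have hW := weighted_le_exp_of_hasDerivWithinAt_reducedRhs_projIcc hK hc hρ hγ hl0 hl1 hX hY
    hX_nonneg hY_nonneg (by simp [hu0]) (by simp [hu0])
  have hh τ (hτ : τ ∈ Icc 0 T) :
      0 ≤ l * a τ + (1 - l) * b τ ∧ l * a τ + (1 - l) * b τ ≤ exp (σ ^ 2 * T) := by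
    have := (projIcc 0 K hK (u τ).1).2.1
    have := (projIcc 0 K hK (u τ).2).2.1
    have hl1' : 0 ≤ 1 - l := sub_nonneg.2 hl1
    have := mul_le_mul_of_nonneg_left (coe_projIcc_le_self hK (hX_nonneg τ hτ)) hl0
    have := mul_le_mul_of_nonneg_left (coe_projIcc_le_self hK (hY_nonneg τ hτ)) hl1'
    have := exp_le_exp.2 (mul_le_mul_of_nonneg_left hτ.2 (sq_nonneg σ))
    exact ⟨by positivity, by linarith [hW τ hτ]⟩
  have hbound τ (hτ : τ ∈ Icc 0 T) :
      gronwallBound 1 (σ ^ 2) (c * exp (σ ^ 2 * T) ^ 2) τ ≤ K :=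
    (gronwallBound_mono zero_le_one (by positivity) (sq_nonneg σ) hτ.2).trans hK_ge
  intro τ hτ
  refine ⟨⟨hX_nonneg τ hτ, ?_⟩, ⟨hY_nonneg τ hτ, ?_⟩⟩
  · have := le_gronwallBound_of_hasDerivWithinAt_reducedRhs_projIcc hK hc hρ hX hX_nonneg hh τ hτ
    simp only [hu0] at this
    exact this.trans (hbound τ hτ)
  · have := le_gronwallBound_of_hasDerivWithinAt_reducedRhs_projIcc hK hc hγ hY hY_nonneg hh τ hτ
    simp only [hu0] at this
    exact this.trans (hbound τ hτ)

theorem exists_nonneg_reducedField_solution {σ c ρ γ l T : ℝ} (hc : 0 ≤ c) (hρ : 0 ≤ ρ)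
    (hγ : 0 ≤ γ) (hl0 : 0 ≤ l) (hl1 : l ≤ 1) (hT : 0 ≤ T) :
    ∃ u : ℝ → ℝ × ℝ, u 0 = (1, 1) ∧ ∀ τ ∈ Icc 0 T,
      0 ≤ u τ ∧ HasDerivWithinAt u (reducedField σ c ρ γ l (u τ)) (Icc 0 T) τ := by
  set K := gronwallBound 1 (σ ^ 2) (c * exp (σ ^ 2 * T) ^ 2) T
  have hK : 0 ≤ K := by
    have := gronwallBound_mono zero_le_one (by positivity) (sq_nonneg σ) hT
      (ε := c * exp (σ ^ 2 * T) ^ 2)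
    rw [gronwallBound_x0] at this
    linarith
  obtain ⟨u, hu0, hu⟩ := exists_truncated_solution σ c ρ γ l hK hT (1, 1)
  have hmem := truncated_solution_mem hK hc hρ hγ hl0 hl1 le_rfl hu0 hu
  refine ⟨u, hu0, fun τ hτ => ⟨⟨(hmem τ hτ).1.1, (hmem τ hτ).2.1⟩, ?_⟩⟩
  simpa [clampBox_of_mem hK (hmem τ hτ)] using hu τ hτ

noncomputable def ereAnsatz (T ρ γ l : ℝ) (u : ℝ → ℝ × ℝ) (t s : ℝ) : ℝ :=
  l * exp (-ρ * (s - t)) * (u (T - s)).1 + (1 - l) * exp (-γ * (s - t)) * (u (T - s)).2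

theorem hasDerivWithinAt_ereAnsatz {T ρ γ l t s : ℝ} {u u' : ℝ → ℝ × ℝ}
    (hu : ∀ τ ∈ Icc 0 T, HasDerivWithinAt u (u' τ) (Icc 0 T) τ) (ht : 0 ≤ t) (hs : s ∈ Icc t T) :
    HasDerivWithinAt (ereAnsatz T ρ γ l u t)
      (ereAnsatz T ρ γ l (fun τ => (-(ρ * (u τ).1 + (u' τ).1), -(γ * (u τ).2 + (u' τ).2))) t s)
      (Icc t T) s := by
  have hmaps : MapsTo (fun r => T - r) (Icc t T) (Icc 0 T) := fun r hr =>
    ⟨by linarith [hr.2], by linarith [hr.1]⟩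
  have hrev : HasDerivWithinAt (fun r => u (T - r)) (-u' (T - s)) (Icc t T) s := by
    have := (hu (T - s) (hmaps hs)).scomp s ((hasDerivWithinAt_id s _).const_sub T) hmaps
    rwa [neg_one_smul] at this
  have hexp (μ : ℝ) : HasDerivWithinAt (fun r => exp (-μ * (r - t)))
      (exp (-μ * (s - t)) * -μ) (Icc t T) s := by
    simpa using (((hasDerivWithinAt_id s _).sub_const t).const_mul (-μ)).exp
  have h1 := (ContinuousLinearMap.fst ℝ ℝ ℝ).hasFDerivAt.comp_hasDerivWithinAt s hrev
  have h2 := (ContinuousLinearMap.snd ℝ ℝ ℝ).hasFDerivAt.comp_hasDerivWithinAt s hrev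
  refine ((((hexp ρ).const_mul l).mul h1).add
    (((hexp γ).const_mul (1 - l)).mul h2)).congr_deriv ?_
  simp only [ereAnsatz, Function.comp_apply, ContinuousLinearMap.coe_fst',
    ContinuousLinearMap.coe_snd', Prod.fst_neg, Prod.snd_neg]
  ring

theorem continuousOn_ereAnsatz {T ρ γ l : ℝ} {u : ℝ → ℝ × ℝ} (hu : ContinuousOn u (Icc 0 T)) :
    ContinuousOn (fun p : ℝ × ℝ => ereAnsatz T ρ γ l u p.1 p.2)
      {p : ℝ × ℝ | 0 ≤ p.1 ∧ p.1 ≤ p.2 ∧ p.2 ≤ T} := by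
  have hrev : ContinuousOn (fun p : ℝ × ℝ => u (T - p.2))
      {p : ℝ × ℝ | 0 ≤ p.1 ∧ p.1 ≤ p.2 ∧ p.2 ≤ T} :=
    hu.comp (by fun_prop) fun p hp => ⟨by linarith [hp.2.2], by linarith [hp.1, hp.2.1]⟩
  unfold ereAnsatz
  exact ((continuousOn_const.mul (by fun_prop)).mul hrev.fst).add
    ((continuousOn_const.mul (by fun_prop)).mul hrev.snd)

theorem ereAnsatz_nonneg {T ρ γ l t s : ℝ} {u : ℝ → ℝ × ℝ} (hl0 : 0 ≤ l) (hl1 : l ≤ 1)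
    (hu : 0 ≤ u (T - s)) : 0 ≤ ereAnsatz T ρ γ l u t s := by
  have : 0 ≤ 1 - l := sub_nonneg.2 hl1
  have : 0 ≤ (u (T - s)).1 := hu.1
  have : 0 ≤ (u (T - s)).2 := hu.2
  unfold ereAnsatz
  positivity

theorem exists_isERESolution_ereAnsatz {T σ R ρ γ l : ℝ} {u : ℝ → ℝ × ℝ} (hu0 : u 0 = (1, 1))
    (hu : ∀ τ ∈ Icc 0 T,
      HasDerivWithinAt u (reducedField σ ((1 - R) / R) ρ γ l (u τ)) (Icc 0 T) τ) :
    ∃ Ps, IsERESolution T σ R (fun t => l * exp (-ρ * t) + (1 - l) * exp (-γ * t))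
      (ereAnsatz T ρ γ l u) Ps := by
  refine ⟨_, continuousOn_ereAnsatz fun τ hτ => (hu τ hτ).continuousWithinAt,
    fun t ht s hs => ⟨hasDerivWithinAt_ereAnsatz hu ht.1 hs, ?_⟩, fun t _ => ?_⟩
  · simp only [ereAnsatz, reducedField, reducedRhs, sub_self, mul_zero, exp_zero, mul_one]
    ring
  · simp [ereAnsatz, hu0]

/-- existence of a nonnegative solution of the equilibrium
Riccati equation of the zero-sum game with non-constant discounting. -/
theorem ere_existence
    (T σ R ρ γ l : ℝ) (hT : 0 < T) (hR0 : 0 < R) (hR1 : R ≤ 1)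
    (hρ : 0 < ρ) (hργ : ρ < γ) (hl0 : 0 < l) (hl1 : l < 1)
    (α : ℝ → ℝ)
    (hα : α = fun t : ℝ => l * Real.exp (-ρ * t) + (1 - l) * Real.exp (-γ * t)) :
    ∃ P Ps : ℝ → ℝ → ℝ, IsERESolution T σ R α P Ps ∧
      ∀ t ∈ Set.Icc (0 : ℝ) T, ∀ s ∈ Set.Icc t T, 0 ≤ P t s := by
  subst hα
  obtain ⟨u, hu0, hu⟩ := exists_nonneg_reducedField_solution (σ := σ) (c := (1 - R) / R)
    (div_nonneg (sub_nonneg.2 hR1) hR0.le) hρ.le (hρ.trans hργ).le hl0.le hl1.le hT.le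
  obtain ⟨Ps, hP⟩ := exists_isERESolution_ereAnsatz hu0 fun τ hτ => (hu τ hτ).2
  refine ⟨_, Ps, hP, fun t ht s hs => ereAnsatz_nonneg hl0.le hl1.le (hu _ ?_).1⟩
  exact ⟨by linarith [hs.2], by linarith [hs.1, ht.1]⟩
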